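/- The function 𝔓_hv satisfies the third-order differential equation on (0,1): for every x ∈ (0,1), the derivative at x of the function y ↦ (y(1−y))^{1/3} · (d/dy)[ (y(1−y))^{2/3} · 𝔓_hv′(y) ] equals 0. -/

import Mathlib

open scoped BigOperators

/-- Rising factorial (Pochhammer symbol) `(x)_k = x(x+1)⋯(x+k-1)`. -/
noncomputable def pochR (x : ℝ) (k : ℕ) : ℝ := ∏ i ∈ Finset.range k, (x + i)

/-- The Gauss hypergeometric series `₂F₁(a,b;c;z)`. -/
noncomputable def F21R (a b c z : ℝ) : ℝ :=
  ∑' k : ℕ, pochR a k * pochR b k / (pochR c k * (Nat.factorial k : ℝ)) * z ^ k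

/-- The generalized hypergeometric series `₃F₂(a₁,a₂,a₃;b₁,b₂;z)`. -/
noncomputable def F32R (a₁ a₂ a₃ b₁ b₂ z : ℝ) : ℝ :=
  ∑' k : ℕ, pochR a₁ k * pochR a₂ k * pochR a₃ k /
      (pochR b₁ k * pochR b₂ k * (Nat.factorial k : ℝ)) * z ^ k

/-- Cardy's horizontal crossing function `𝔓_h`. -/
noncomputable def Ph (z : ℝ) : ℝ :=
  3 * Real.Gamma (2/3) / (Real.Gamma (1/3)) ^ 2 * z ^ ((1:ℝ)/3) *
    F21R (1/3) (2/3) (4/3) z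

/-- Watts's horizontal-vertical crossing function `𝔓_hv`. -/
noncomputable def Phv (z : ℝ) : ℝ :=
  Ph z - Real.sqrt 3 / (2 * Real.pi) * z * F32R 1 1 (4/3) 2 (5/3) z

/-- Cardy's cluster-number function `𝔑_h`. -/
noncomputable def Nh (z : ℝ) : ℝ :=
  1/2 - Real.sqrt 3 / (4 * Real.pi) *
    (Real.log (1 - z) + (1 - z) * F32R 1 1 (4/3) 2 (5/3) (1 - z))

/-!
On `(0,1)` the series may be differentiated termwise. Since `(1/3)_k / (4/3)_k = (1/3) / (k + 1/3)`,
the derivative of `z^{1/3} ₂F₁(1/3,2/3;4/3;z)` is `(1/3) z^{-2/3} ∑ (2/3)_k / k! z^k`, i.e.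
`(1/3) (z(1-z))^{-2/3}` by the binomial series; and the derivative of `z ₃F₂(1,1,4/3;2,5/3;z)` is
`g = ₂F₁(4/3,1;5/3;z)`. Hence `(z(1-z))^{2/3} 𝔓_hv' = Γ(2/3)/Γ(1/3)² - (√3/2π) (z(1-z))^{2/3} g`,
and the remaining operator `d/dz (z(1-z))^{1/3} d/dz` turns `(z(1-z))^{2/3} g` into
`z(1-z) g'' + (5/3 - 10/3 z) g' - 4/3 g`, which vanishes by the hypergeometric equation: on
coefficients it is the recurrence `(k+1)(k+5/3) g_{k+1} = (k+4/3)(k+1) g_k`.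
-/

open Topology Set

/-! ### Real power series with polynomially bounded coefficients -/

noncomputable def powSeries (f : ℕ → ℝ) (z : ℝ) : ℝ := ∑' k, f k * z ^ k

def derivCoeff (f : ℕ → ℝ) (k : ℕ) : ℝ := (k + 1) * f (k + 1)

def shiftCoeff (f : ℕ → ℝ) : ℕ → ℝ
  | 0 => 0
  | k + 1 => f k

def PolyGrowth (f : ℕ → ℝ) : Prop := ∃ M : ℝ, ∃ p : ℕ, ∀ k, |f k| ≤ M * ((k : ℝ) + 1) ^ p

section

variable {f : ℕ → ℝ}

lemma PolyGrowth.of_abs_le {M : ℝ} (h : ∀ k, |f k| ≤ M) : PolyGrowth f :=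
  ⟨M, 0, by simpa using h⟩

lemma PolyGrowth.derivCoeff (hf : PolyGrowth f) : PolyGrowth (derivCoeff f) := by
  obtain ⟨M, p, h⟩ := hf
  have hM : 0 ≤ M := by simpa using (abs_nonneg _).trans (h 0)
  refine ⟨2 ^ p * M, p + 1, fun k => ?_⟩
  have hk : ((k + 1 : ℕ) : ℝ) + 1 ≤ 2 * ((k : ℝ) + 1) := by push_cast; linarith
  calc |((k : ℝ) + 1) * f (k + 1)| = ((k : ℝ) + 1) * |f (k + 1)| := by
        rw [abs_mul, abs_of_nonneg (by positivity)]
    _ ≤ ((k : ℝ) + 1) * (M * (2 * ((k : ℝ) + 1)) ^ p) := by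
        gcongr
        exact (h (k + 1)).trans (by gcongr)
    _ = 2 ^ p * M * ((k : ℝ) + 1) ^ (p + 1) := by rw [mul_pow]; ring

lemma summable_add_one_pow_mul_geometric (p : ℕ) {r : ℝ} (hr0 : 0 < r) (hr1 : r < 1) :
    Summable fun k : ℕ => ((k : ℝ) + 1) ^ p * r ^ k := by
  have h := (summable_nat_add_iff (f := fun n : ℕ => (n : ℝ) ^ p * r ^ n) 1).mpr
    (summable_pow_mul_geometric_of_norm_lt_one p (by rwa [Real.norm_of_nonneg hr0.le]))
  refine (h.mul_left r⁻¹).congr fun k => ?_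
  simp only [Nat.cast_add, Nat.cast_one, pow_succ]
  field_simp

lemma PolyGrowth.summable_abs_mul_pow (hf : PolyGrowth f) {r : ℝ} (hr0 : 0 < r)
    (hr1 : r < 1) : Summable fun k => |f k| * r ^ k := by
  obtain ⟨M, p, h⟩ := hf
  refine Summable.of_nonneg_of_le (fun k => by positivity) (fun k => ?_)
    ((summable_add_one_pow_mul_geometric p hr0 hr1).mul_left M)
  rw [← mul_assoc]
  gcongr
  exact h k

lemma hasSum_powSeries (hf : PolyGrowth f) {z : ℝ} (hz : |z| < 1) :
    HasSum (fun k => f k * z ^ k) (powSeries f z) := by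
  obtain ⟨r, hzr, hr1⟩ := exists_between hz
  refine (Summable.of_norm_bounded (hf.summable_abs_mul_pow ((abs_nonneg z).trans_lt hzr) hr1)
    fun k => ?_).hasSum
  rw [Real.norm_eq_abs, abs_mul, abs_pow]
  gcongr

lemma hasDerivAt_powSeries (hf : PolyGrowth f) {z : ℝ} (hz : |z| < 1) :
    HasDerivAt (powSeries f) (powSeries (derivCoeff f) z) z := by
  obtain ⟨r, hzr, hr1⟩ := exists_between hz
  have hr0 : 0 < r := (abs_nonneg z).trans_lt hzr
  have hu : Summable fun k : ℕ => |f k| * k * r ^ (k - 1) := by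
    refine (summable_nat_add_iff 1).mp ((hf.derivCoeff.summable_abs_mul_pow hr0 hr1).congr
      fun k => ?_)
    rw [derivCoeff, abs_mul, abs_of_nonneg (by positivity), Nat.add_sub_cancel]
    push_cast
    ring
  have hbound : ∀ k (y : ℝ), y ∈ Metric.ball 0 r →
      ‖f k * (k * y ^ (k - 1))‖ ≤ |f k| * k * r ^ (k - 1) := by
    intro k y hy
    rw [mem_ball_zero_iff, Real.norm_eq_abs] at hy
    rw [Real.norm_eq_abs, abs_mul, abs_mul, abs_pow, Nat.abs_cast, ← mul_assoc]
    gcongr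
  have hD : powSeries (derivCoeff f) z = ∑' k : ℕ, f k * (k * z ^ (k - 1)) := by
    rw [tsum_eq_zero_add' ?_]
    · simp only [powSeries, derivCoeff, Nat.cast_zero, zero_mul, mul_zero, zero_add,
        Nat.add_sub_cancel, Nat.cast_add, Nat.cast_one]
      exact tsum_congr fun k => by ring
    · exact ((hasSum_powSeries hf.derivCoeff hz).summable).congr fun k => by
        simp only [derivCoeff, Nat.add_sub_cancel, Nat.cast_add, Nat.cast_one]; ring
  rw [hD]
  exact hasDerivAt_tsum_of_isPreconnected hu Metric.isOpen_ball
    (convex_ball (0 : ℝ) r).isPreconnected (fun k y _ => (hasDerivAt_pow k y).const_mul (f k))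
    hbound (mem_ball_zero_iff.mpr hzr) (hasSum_powSeries hf hz).summable (mem_ball_zero_iff.mpr hzr)

lemma hasSum_shiftCoeff {z s : ℝ} (h : HasSum (fun k => f k * z ^ k) s) :
    HasSum (fun k => shiftCoeff f k * z ^ k) (z * s) := by
  refine (hasSum_nat_add_iff' 1).mp ?_
  simpa [shiftCoeff, pow_succ, mul_comm, mul_left_comm] using h.mul_left z

lemma shiftCoeff_derivCoeff (k : ℕ) : shiftCoeff (derivCoeff f) k = k * f k := by
  cases k <;> simp [shiftCoeff, derivCoeff]

lemma hasSum_natCast_mul_powSeries (hf : PolyGrowth f) {z : ℝ} (hz : |z| < 1) :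
    HasSum (fun k => k * f k * z ^ k) (z * powSeries (derivCoeff f) z) := by
  simpa only [shiftCoeff_derivCoeff] using hasSum_shiftCoeff (hasSum_powSeries hf.derivCoeff hz)

lemma hasDerivAt_rpow_mul_powSeries (hf : PolyGrowth f) (s : ℝ) {z : ℝ}
    (hz0 : 0 < z) (hz1 : z < 1) :
    HasDerivAt (fun y => y ^ s * powSeries f y)
      (z ^ (s - 1) * powSeries (fun k => (s + k) * f k) z) z := by
  have hz : |z| < 1 := by rwa [abs_of_pos hz0]
  have hsum : powSeries (fun k => (s + k) * f k) z = s * powSeries f z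
      + z * powSeries (derivCoeff f) z :=
    (((hasSum_powSeries hf hz).mul_left s).add (hasSum_natCast_mul_powSeries hf hz)).tsum_eq ▸
      tsum_congr fun k => by ring
  refine ((Real.hasDerivAt_rpow_const (p := s) (Or.inl hz0.ne')).mul
    (hasDerivAt_powSeries hf hz)).congr_deriv ?_
  rw [hsum, Real.rpow_sub_one hz0.ne']
  field_simp

lemma powSeries_hypergeometric_ode (hf : PolyGrowth f) {a b c : ℝ}
    (hrec : ∀ k : ℕ, (k + 1) * (k + c) * f (k + 1) = (k + a) * (k + b) * f k)
    {z : ℝ} (hz : |z| < 1) :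
    z * (1 - z) * powSeries (derivCoeff (derivCoeff f)) z
      + (c - (a + b + 1) * z) * powSeries (derivCoeff f) z - a * b * powSeries f z = 0 := by
  have h0 := hasSum_powSeries hf hz
  have h1 := hasSum_powSeries hf.derivCoeff hz
  have hθ1 := hasSum_natCast_mul_powSeries hf hz
  have hθ2 := hasSum_natCast_mul_powSeries hf.derivCoeff hz
  have hθθ := hasSum_shiftCoeff hθ2
  have hzero := (((hθ2.sub hθθ).add ((h1.mul_left c).sub (hθ1.mul_left (a + b + 1)))).sub
    (h0.mul_left (a * b))).congr_fun (g := fun _ => 0) fun k => ?_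
  · linear_combination hzero.unique hasSum_zero
  -- the `k`-th coefficient is `(k+1)(k+c) f (k+1) - (k+a)(k+b) f k`, times `z ^ k`
  rcases k with _ | k
  · simp only [shiftCoeff, derivCoeff]
    push_cast
    linear_combination -(hrec 0)
  · have hrec' := hrec (k + 1)
    simp only [shiftCoeff, derivCoeff, Nat.cast_add, Nat.cast_one] at hrec' ⊢
    linear_combination (-(z ^ (k + 1))) * hrec'

end

/-! ### Pochhammer symbols and hypergeometric coefficients -/

lemma pochR_succ (x : ℝ) (k : ℕ) : pochR x (k + 1) = pochR x k * (x + k) :=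
  Finset.prod_range_succ _ _

lemma pochR_eq_ascPochhammer_eval (x : ℝ) (k : ℕ) :
    pochR x k = (ascPochhammer ℝ k).eval x := by
  induction k with
  | zero => simp [pochR]
  | succ k ih => rw [pochR_succ, ih, ascPochhammer_succ_eval]

lemma pochR_succ' (x : ℝ) (k : ℕ) : pochR x (k + 1) = x * pochR (x + 1) k := by
  simp only [pochR_eq_ascPochhammer_eval, ascPochhammer_succ_left, Polynomial.eval_mul,
    Polynomial.eval_X, Polynomial.eval_comp, Polynomial.eval_add, Polynomial.eval_one]

lemma pochR_one (k : ℕ) : pochR 1 k = k.factorial := by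
  rw [pochR_eq_ascPochhammer_eval, ascPochhammer_eval_one]

lemma pochR_two (k : ℕ) : pochR 2 k = (k + 1).factorial := by
  have h := pochR_succ' 1 k
  rw [pochR_one, one_mul, one_add_one_eq_two] at h
  exact h.symm

lemma pochR_pos {x : ℝ} (hx : 0 < x) (k : ℕ) : 0 < pochR x k := by
  rw [pochR_eq_ascPochhammer_eval]
  exact ascPochhammer_pos k x hx

lemma pochR_ne_zero {x : ℝ} (hx : ∀ n : ℕ, x + n ≠ 0) (k : ℕ) : pochR x k ≠ 0 :=
  Finset.prod_ne_zero_iff.mpr fun n _ => hx n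

lemma pochR_le_pochR {x y : ℝ} (hx : 0 < x) (hxy : x ≤ y) (k : ℕ) : pochR x k ≤ pochR y k :=
  Finset.prod_le_prod (fun _ _ => by positivity) fun _ _ => by linarith

lemma choose_add_sub_one_eq_pochR_div_factorial (a : ℝ) (k : ℕ) :
    Ring.choose (a + k - 1) k = pochR a k / k.factorial := by
  rw [Ring.choose_eq_smul, Polynomial.descPochhammer_smeval_eq_ascPochhammer,
    Polynomial.ascPochhammer_smeval_eq_eval, pochR_eq_ascPochhammer_eval, smul_eq_mul,
    div_eq_inv_mul]
  congr 2
  ring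

lemma hasSum_pochR_div_factorial_mul_pow (a : ℝ) {z : ℝ} (hz : |z| < 1) :
    HasSum (fun k => pochR a k / k.factorial * z ^ k) ((1 - z) ^ (-a)) := by
  have h := (Real.one_div_one_sub_rpow_hasFPowerSeriesOnBall_zero a).hasSum (y := z)
    (by simpa [enorm_eq_nnnorm, ← NNReal.coe_lt_one] using hz)
  simp only [FormalMultilinearSeries.ofScalars_apply_eq, smul_eq_mul, zero_add,
    choose_add_sub_one_eq_pochR_div_factorial] at h
  rwa [Real.rpow_neg (by linarith [(abs_lt.mp hz).2]), ← one_div]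

noncomputable def F21Coeff (a b c : ℝ) (k : ℕ) : ℝ :=
  pochR a k * pochR b k / (pochR c k * k.factorial)

noncomputable def F32Coeff (a₁ a₂ a₃ b₁ b₂ : ℝ) (k : ℕ) : ℝ :=
  pochR a₁ k * pochR a₂ k * pochR a₃ k / (pochR b₁ k * pochR b₂ k * k.factorial)

lemma F21R_eq_powSeries (a b c z : ℝ) : F21R a b c z = powSeries (F21Coeff a b c) z := rfl

lemma F32R_eq_powSeries (a₁ a₂ a₃ b₁ b₂ z : ℝ) :
    F32R a₁ a₂ a₃ b₁ b₂ z = powSeries (F32Coeff a₁ a₂ a₃ b₁ b₂) z := rfl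

lemma abs_F21Coeff_le_one {a b c : ℝ} (ha : 0 < a) (hac : a ≤ c) (hb : 0 < b) (hb1 : b ≤ 1)
    (k : ℕ) : |F21Coeff a b c k| ≤ 1 := by
  have hc := pochR_pos (ha.trans_le hac) k
  have hfact : (0 : ℝ) < k.factorial := by exact_mod_cast k.factorial_pos
  rw [F21Coeff, abs_of_nonneg (by have := pochR_pos ha k; have := pochR_pos hb k; positivity),
    div_le_one (by positivity)]
  refine mul_le_mul (pochR_le_pochR ha hac k) ?_ (pochR_pos hb k).le hc.le
  exact (pochR_le_pochR hb hb1 k).trans_eq (pochR_one k)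

lemma polyGrowth_F21Coeff {a b c : ℝ} (ha : 0 < a) (hac : a ≤ c) (hb : 0 < b) (hb1 : b ≤ 1) :
    PolyGrowth (F21Coeff a b c) :=
  .of_abs_le (abs_F21Coeff_le_one ha hac hb hb1)

lemma F21Coeff_recurrence (a b : ℝ) {c : ℝ} (hc : ∀ n : ℕ, c + n ≠ 0) (k : ℕ) :
    (k + 1) * (k + c) * F21Coeff a b c (k + 1) = (k + a) * (k + b) * F21Coeff a b c k := by
  have hfact : (k.factorial : ℝ) ≠ 0 := by exact_mod_cast k.factorial_ne_zero
  simp only [F21Coeff, pochR_succ, Nat.factorial_succ, Nat.cast_mul, Nat.cast_add, Nat.cast_one]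
  field_simp [pochR_ne_zero hc k, hc k]
  ring

lemma add_mul_F21Coeff (a b : ℝ) (ha : ∀ n : ℕ, a + 1 + n ≠ 0) (k : ℕ) :
    (a + k) * F21Coeff a b (a + 1) k = a * (pochR b k / k.factorial) := by
  have hfact : (k.factorial : ℝ) ≠ 0 := by exact_mod_cast k.factorial_ne_zero
  have hshift : pochR a k * (a + k) = a * pochR (a + 1) k := by rw [← pochR_succ, pochR_succ']
  rw [F21Coeff]
  field_simp [pochR_ne_zero ha k]
  linear_combination pochR b k * hshift

lemma one_add_mul_F32Coeff (b c : ℝ) (k : ℕ) :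
    (1 + k) * F32Coeff 1 1 b 2 c k = F21Coeff b 1 c k := by
  have hfact : (k.factorial : ℝ) ≠ 0 := by exact_mod_cast k.factorial_ne_zero
  simp only [F32Coeff, F21Coeff, pochR_one, pochR_two, Nat.factorial_succ, Nat.cast_mul,
    Nat.cast_add, Nat.cast_one]
  rcases eq_or_ne (pochR c k) 0 with hc | hc
  · simp [hc]
  · field_simp
    ring

/-! ### The derivative of `𝔓_hv` -/

lemma hasDerivAt_mul_one_sub (y : ℝ) : HasDerivAt (fun t => t * (1 - t)) (1 - 2 * y) y := by
  refine ((hasDerivAt_id y).mul ((hasDerivAt_id y).const_sub 1)).congr_deriv ?_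
  simp only [id]
  ring

lemma hasDerivAt_Ph {t : ℝ} (ht0 : 0 < t) (ht1 : t < 1) :
    HasDerivAt Ph (Real.Gamma (2/3) / Real.Gamma (1/3) ^ 2 * (t * (1 - t)) ^ (-(2/3) : ℝ)) t := by
  -- `4/3` is written `1/3 + 1` so that `add_mul_F21Coeff` applies
  have hcoeff : PolyGrowth (F21Coeff (1/3) (2/3) (1/3 + 1)) :=
    polyGrowth_F21Coeff (by norm_num) (by norm_num) (by norm_num) (by norm_num)
  have hbinom : powSeries (fun k => (1/3 + k) * F21Coeff (1/3) (2/3) (1/3 + 1) k) t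
      = 1/3 * (1 - t) ^ (-(2/3) : ℝ) := by
    rw [← ((hasSum_pochR_div_factorial_mul_pow (2/3) (by rw [abs_of_pos ht0]; exact ht1)).mul_left
      (1/3)).tsum_eq]
    refine tsum_congr fun k => ?_
    beta_reduce
    rw [add_mul_F21Coeff (1/3) (2/3) (fun n => by positivity) k]
    ring
  have hPh : Ph = fun y => 3 * Real.Gamma (2/3) / Real.Gamma (1/3) ^ 2 *
      (y ^ (1/3 : ℝ) * powSeries (F21Coeff (1/3) (2/3) (1/3 + 1)) y) := by
    funext y
    rw [Ph, F21R_eq_powSeries, show (4/3 : ℝ) = 1/3 + 1 by norm_num]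
    ring
  rw [hPh]
  refine ((hasDerivAt_rpow_mul_powSeries hcoeff _ ht0 ht1).const_mul _).congr_deriv ?_
  rw [hbinom, Real.mul_rpow ht0.le (by linarith), show (1/3 : ℝ) - 1 = -(2/3) by norm_num]
  ring

lemma hasDerivAt_mul_F32R {t : ℝ} (ht0 : 0 < t) (ht1 : t < 1) :
    HasDerivAt (fun y => y * F32R 1 1 (4/3) 2 (5/3) y) (F21R (4/3) 1 (5/3) t) t := by
  have hcoeff : PolyGrowth (F32Coeff 1 1 (4/3) 2 (5/3)) := by
    refine .of_abs_le (M := 1) fun k => ?_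
    have h := abs_F21Coeff_le_one (a := 4/3) (b := 1) (c := 5/3) (by norm_num) (by norm_num)
      one_pos le_rfl k
    rw [← one_add_mul_F32Coeff, abs_mul, abs_of_pos (by positivity)] at h
    exact (le_mul_of_one_le_left (abs_nonneg _) (by simp)).trans h
  have h := hasDerivAt_rpow_mul_powSeries hcoeff 1 ht0 ht1
  simp only [Real.rpow_one, sub_self, Real.rpow_zero, one_mul, one_add_mul_F32Coeff] at h
  simpa only [F32R_eq_powSeries, F21R_eq_powSeries] using h

lemma hasDerivAt_Phv {t : ℝ} (ht0 : 0 < t) (ht1 : t < 1) :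
    HasDerivAt Phv (Real.Gamma (2/3) / Real.Gamma (1/3) ^ 2 * (t * (1 - t)) ^ (-(2/3) : ℝ)
      - Real.sqrt 3 / (2 * Real.pi) * F21R (4/3) 1 (5/3) t) t := by
  have hPhv : Phv = fun y =>
      Ph y - Real.sqrt 3 / (2 * Real.pi) * (y * F32R 1 1 (4/3) 2 (5/3) y) := by
    funext y
    rw [Phv, mul_assoc]
  rw [hPhv]
  exact (hasDerivAt_Ph ht0 ht1).sub ((hasDerivAt_mul_F32R ht0 ht1).const_mul _)

lemma rpow_mul_deriv_Phv {t : ℝ} (ht0 : 0 < t) (ht1 : t < 1) :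
    (t * (1 - t)) ^ (2/3 : ℝ) * deriv Phv t = Real.Gamma (2/3) / Real.Gamma (1/3) ^ 2
      - Real.sqrt 3 / (2 * Real.pi) * ((t * (1 - t)) ^ (2/3 : ℝ) * F21R (4/3) 1 (5/3) t) := by
  have hw : 0 < t * (1 - t) := mul_pos ht0 (by linarith)
  have hcancel : (t * (1 - t)) ^ (2/3 : ℝ) * (t * (1 - t)) ^ (-(2/3) : ℝ) = 1 := by
    rw [← Real.rpow_add hw]
    norm_num
  rw [(hasDerivAt_Phv ht0 ht1).deriv]
  linear_combination Real.Gamma (2/3) / Real.Gamma (1/3) ^ 2 * hcancel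

/-! ### The operator `h ↦ (y(1-y))^{1/3} (d/dy) [(y(1-y))^{2/3} h]` -/

noncomputable def weightedDeriv (h : ℝ → ℝ) (y : ℝ) : ℝ :=
  (y * (1 - y)) ^ (1/3 : ℝ) * deriv (fun t => (t * (1 - t)) ^ (2/3 : ℝ) * h t) y

lemma hasDerivAt_rpow_two_thirds_mul {h : ℝ → ℝ} {h' y : ℝ} (hh : HasDerivAt h h' y)
    (hy0 : 0 < y) (hy1 : y < 1) :
    HasDerivAt (fun t => (t * (1 - t)) ^ (2/3 : ℝ) * h t)
      ((y * (1 - y)) ^ (-(1/3) : ℝ) * (2/3 * (1 - 2 * y) * h y + y * (1 - y) * h')) y := by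
  have hw : 0 < y * (1 - y) := mul_pos hy0 (by linarith)
  refine (((hasDerivAt_mul_one_sub y).rpow_const (p := 2/3) (Or.inl hw.ne')).mul hh).congr_deriv ?_
  have hsplit : (y * (1 - y)) ^ (2/3 : ℝ) = (y * (1 - y)) ^ (-(1/3) : ℝ) * (y * (1 - y)) := by
    rw [← Real.rpow_add_one hw.ne']
    norm_num
  rw [hsplit, show (2/3 : ℝ) - 1 = -(1/3) by norm_num]
  ring

lemma weightedDeriv_eq {h : ℝ → ℝ} {h' y : ℝ} (hh : HasDerivAt h h' y) (hy0 : 0 < y)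
    (hy1 : y < 1) : weightedDeriv h y = 2/3 * (1 - 2 * y) * h y + y * (1 - y) * h' := by
  have hcancel : (y * (1 - y)) ^ (1/3 : ℝ) * (y * (1 - y)) ^ (-(1/3) : ℝ) = 1 := by
    rw [← Real.rpow_add (mul_pos hy0 (by linarith))]
    norm_num
  rw [weightedDeriv, (hasDerivAt_rpow_two_thirds_mul hh hy0 hy1).deriv, ← mul_assoc, hcancel,
    one_mul]

lemma hasDerivAt_weightedDeriv_F21R {x : ℝ} (hx : x ∈ Ioo (0 : ℝ) 1) :
    HasDerivAt (weightedDeriv (F21R (4/3) 1 (5/3))) 0 x := by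
  set f := F21Coeff (4/3) 1 (5/3)
  have hf : PolyGrowth f := polyGrowth_F21Coeff (by norm_num) (by norm_num) one_pos le_rfl
  have habs : ∀ y ∈ Ioo (0 : ℝ) 1, |y| < 1 := fun y hy => by rw [abs_of_pos hy.1]; exact hy.2
  have hode := powSeries_hypergeometric_ode hf
    (F21Coeff_recurrence (4/3) 1 (fun n => by positivity)) (habs x hx)
  have hlin : HasDerivAt (fun y : ℝ => 2/3 * (1 - 2 * y)) (2/3 * -(2 * 1)) x :=
    (((hasDerivAt_id x).const_mul 2).const_sub 1).const_mul _
  have hF := hasDerivAt_powSeries hf (habs x hx)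
  have hF' := hasDerivAt_powSeries hf.derivCoeff (habs x hx)
  refine (((hlin.mul hF).add ((hasDerivAt_mul_one_sub x).mul hF')).congr_deriv
    (by linear_combination hode)).congr_of_eventuallyEq ?_
  filter_upwards [isOpen_Ioo.mem_nhds hx] with y hy
  exact weightedDeriv_eq (hasDerivAt_powSeries hf (habs y hy)) hy.1 hy.2

lemma weightedDeriv_deriv_Phv {y : ℝ} (hy : y ∈ Ioo (0 : ℝ) 1) :
    weightedDeriv (deriv Phv) y
      = -(Real.sqrt 3 / (2 * Real.pi)) * weightedDeriv (F21R (4/3) 1 (5/3)) y := by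
  have hf := polyGrowth_F21Coeff (a := 4/3) (b := 1) (c := 5/3) (by norm_num) (by norm_num)
    one_pos le_rfl
  have hF : HasDerivAt (F21R (4/3) 1 (5/3)) _ y :=
    hasDerivAt_powSeries hf (by rw [abs_of_pos hy.1]; exact hy.2)
  have hg := hasDerivAt_rpow_two_thirds_mul hF hy.1 hy.2
  have heq : (fun t => (t * (1 - t)) ^ (2/3 : ℝ) * deriv Phv t) =ᶠ[𝓝 y]
      fun t => Real.Gamma (2/3) / Real.Gamma (1/3) ^ 2
        - Real.sqrt 3 / (2 * Real.pi) * ((t * (1 - t)) ^ (2/3 : ℝ) * F21R (4/3) 1 (5/3) t) := by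
    filter_upwards [isOpen_Ioo.mem_nhds hy] with t ht
    exact rpow_mul_deriv_Phv ht.1 ht.2
  rw [weightedDeriv, weightedDeriv, heq.deriv_eq, ((hg.const_mul _).const_sub _).deriv, hg.deriv]
  ring

/-- `𝔓_hv` satisfies the third-order differential equation on `(0,1)`. -/
theorem stmt7 (x : ℝ) (hx : x ∈ Set.Ioo (0:ℝ) 1) :
    deriv
      (fun y => (y * (1 - y)) ^ ((1:ℝ)/3) *
        deriv (fun t => (t * (1 - t)) ^ ((2:ℝ)/3) * deriv Phv t) y) x = 0 := by
  have heq : weightedDeriv (deriv Phv) =ᶠ[𝓝 x]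
      fun y => -(Real.sqrt 3 / (2 * Real.pi)) * weightedDeriv (F21R (4/3) 1 (5/3)) y := by
    filter_upwards [isOpen_Ioo.mem_nhds hx] with y hy using weightedDeriv_deriv_Phv hy
  change deriv (weightedDeriv (deriv Phv)) x = 0
  rw [heq.deriv_eq, ((hasDerivAt_weightedDeriv_F21R hx).const_mul _).deriv, mul_zero]
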